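/- arXiv:1611.04765 — 7 statements merged into one kernel-verified Lean document; each statement's English description precedes it below -/
import Mathlib

section
/- Let f_1(λ) := (1−λ)·(log(1−λ))²/λ for λ ∈ (0,1). There exists a unique λ̃_1 ∈ (0,1) such that −2λ̃_1 − log(1−λ̃_1) = 0 (numerically λ̃_1 ≈ 0.7968), and λ̃_1 ∈ (1/2, 1). Moreover f_1′(λ) > 0 for λ ∈ (0, λ̃_1) and f_1′(λ) < 0 for λ ∈ (λ̃_1, 1), so that sup_{λ∈(0,1)} f_1(λ) = f_1(λ̃_1) and λ̃_1 is the unique maximizer of f_1 on (0,1). -/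
/-!
Write `f₁'(x) = log (1 - x) · g(x) / x²` with `g(x) = critFun x = -2x - log (1 - x)`. The
function `g` is strictly convex on `(-∞, 1)` and vanishes at `0`; since `g(1/2) = log 2 - 1 < 0`
and `g(1 - e⁻²) = 2e⁻² > 0`, it has exactly one further zero `c ∈ (0, 1)`, lying in `(1/2, 1)`,
and by convexity `g < 0` on `(0, c)` and `g > 0` on `(c, 1)`. As `log (1 - x) < 0` there, `f₁` strictly
increases on `(0, c]` and strictly decreases on `[c, 1)`.
-/

open Set Real

noncomputable def critFun (x : ℝ) : ℝ := -2 * x - log (1 - x)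

theorem hasDerivAt_critFun {x : ℝ} (hx : x ≠ 1) :
    HasDerivAt critFun (-2 + (1 - x)⁻¹) x := by
  have hlog : HasDerivAt (fun y => log (1 - y)) ((1 - x)⁻¹ * (-1)) x :=
    (hasDerivAt_log (sub_ne_zero.2 hx.symm)).comp x ((hasDerivAt_id x).const_sub 1)
  exact (((hasDerivAt_id x).const_mul (-2)).fun_sub hlog).congr_deriv (by ring)

theorem continuousOn_critFun : ContinuousOn critFun (Iio 1) := fun _ hx =>
  (hasDerivAt_critFun hx.ne).continuousAt.continuousWithinAt

theorem strictConvexOn_critFun : StrictConvexOn ℝ (Iio 1) critFun := by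
  refine StrictMonoOn.strictConvexOn_of_deriv (convex_Iio 1) continuousOn_critFun ?_
  rw [interior_Iio]
  intro x hx y hy hxy
  rw [(hasDerivAt_critFun hx.ne).deriv, (hasDerivAt_critFun hy.ne).deriv]
  have : (1 - x)⁻¹ < (1 - y)⁻¹ := inv_strictAnti₀ (sub_pos.2 hy) (by linarith)
  linarith

theorem exists_critFun_eq_zero : ∃ c ∈ Ioo (1 / 2 : ℝ) 1, critFun c = 0 := by
  set b : ℝ := 1 - exp (-2)
  have hexp : exp (-2) < 1 / 2 := by
    rw [exp_neg, inv_lt_comm₀ (exp_pos 2) (by norm_num)]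
    linarith [add_one_le_exp (2 : ℝ)]
  have hb : b < 1 := sub_lt_self 1 (exp_pos _)
  have half_neg : critFun (1 / 2) < 0 := by
    rw [critFun, show (1 : ℝ) - 1 / 2 = 2⁻¹ by norm_num, log_inv]
    linarith [log_two_lt_d9]
  have b_pos : 0 < critFun b := by
    rw [critFun, sub_sub_cancel, log_exp]
    linarith [exp_pos (-2)]
  obtain ⟨c, hc, hc0⟩ := intermediate_value_Ioo (by linarith)
    (continuousOn_critFun.mono fun x hx => hx.2.trans_lt hb) ⟨half_neg, b_pos⟩
  exact ⟨c, ⟨hc.1, hc.2.trans hb⟩, hc0⟩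

section TwoZeros

variable {f : ℝ → ℝ} {s : Set ℝ} {a b : ℝ}

theorem StrictConvexOn.neg_between_zeros (hf : StrictConvexOn ℝ s f) (ha : a ∈ s) (hb : b ∈ s)
    (hfa : f a = 0) (hfb : f b = 0) {x : ℝ} (hx : x ∈ Ioo a b) : f x < 0 := by
  have hab : a < b := hx.1.trans hx.2
  simpa [hfa, hfb] using
    hf.lt_on_openSegment ha hb hab.ne (by rwa [openSegment_eq_Ioo hab])

theorem StrictConvexOn.pos_beyond_zeros (hf : StrictConvexOn ℝ s f) (ha : a ∈ s)
    (hfa : f a = 0) (hfb : f b = 0) (hab : a < b) {x : ℝ} (hx : x ∈ s) (hbx : b < x) :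
    0 < f x := by
  have := hf.lt_on_openSegment ha hx (hab.trans hbx).ne
    (by rw [openSegment_eq_Ioo (hab.trans hbx)]; exact ⟨hab, hbx⟩)
  simpa [hfa, hfb] using this

end TwoZeros

theorem critFun_neg_of_mem_Ioo {c x : ℝ} (hc : c < 1) (hc0 : critFun c = 0)
    (hx : x ∈ Ioo 0 c) : critFun x < 0 :=
  strictConvexOn_critFun.neg_between_zeros (by norm_num) hc (by simp [critFun]) hc0 hx

theorem critFun_pos_of_mem_Ioo {c x : ℝ} (hc : 0 < c) (hc0 : critFun c = 0)
    (hx : x ∈ Ioo c 1) : 0 < critFun x :=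
  strictConvexOn_critFun.pos_beyond_zeros (by norm_num) (by simp [critFun]) hc0 hc hx.2 hx.1

theorem eq_of_critFun_eq_zero {c x : ℝ} (hc : c ∈ Ioo 0 1) (hc0 : critFun c = 0)
    (hx : x ∈ Ioo 0 1) (hx0 : critFun x = 0) : x = c := by
  rcases lt_trichotomy x c with h | h | h
  · exact absurd hx0 (critFun_neg_of_mem_Ioo hc.2 hc0 ⟨hx.1, h⟩).ne
  · exact h
  · exact absurd hx0 (critFun_pos_of_mem_Ioo hc.1 hc0 ⟨h, hx.2⟩).ne'

theorem hasDerivAt_f₁ {x : ℝ} (hx₀ : x ≠ 0) (hx₁ : x ≠ 1) :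
    HasDerivAt (fun y => (1 - y) * log (1 - y) ^ 2 / y)
      (log (1 - x) * critFun x / x ^ 2) x := by
  have h1 : 1 - x ≠ 0 := sub_ne_zero.2 hx₁.symm
  have hlog : HasDerivAt (fun y => log (1 - y)) ((1 - x)⁻¹ * (-1)) x :=
    (hasDerivAt_log h1).comp x ((hasDerivAt_id x).const_sub 1)
  refine ((((hasDerivAt_id x).const_sub 1).fun_mul (hlog.fun_pow 2)).fun_div
    (hasDerivAt_id x) hx₀).congr_deriv ?_
  simp only [critFun, id]
  field_simp
  ring

theorem deriv_f₁_pos {x : ℝ} (hx : x ∈ Ioo 0 1) (h : critFun x < 0) :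
    0 < deriv (fun y => (1 - y) * log (1 - y) ^ 2 / y) x := by
  rw [(hasDerivAt_f₁ hx.1.ne' hx.2.ne).deriv]
  exact div_pos (mul_pos_of_neg_of_neg (log_neg (by linarith [hx.2]) (by linarith [hx.1])) h)
    (pow_pos hx.1 2)

theorem deriv_f₁_neg {x : ℝ} (hx : x ∈ Ioo 0 1) (h : 0 < critFun x) :
    deriv (fun y => (1 - y) * log (1 - y) ^ 2 / y) x < 0 := by
  rw [(hasDerivAt_f₁ hx.1.ne' hx.2.ne).deriv]
  exact div_neg_of_neg_of_pos
    (mul_neg_of_neg_of_pos (log_neg (by linarith [hx.2]) (by linarith [hx.1])) h) (pow_pos hx.1 2)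

theorem continuousOn_f₁ : ContinuousOn (fun y => (1 - y) * log (1 - y) ^ 2 / y) (Ioo 0 1) :=
  fun _ hx => (hasDerivAt_f₁ hx.1.ne' hx.2.ne).continuousAt.continuousWithinAt

theorem lt_of_deriv_pos_of_deriv_neg {f : ℝ → ℝ} {a b c : ℝ} (hf : ContinuousOn f (Ioo a b))
    (hc : c ∈ Ioo a b) (hpos : ∀ x ∈ Ioo a c, 0 < deriv f x)
    (hneg : ∀ x ∈ Ioo c b, deriv f x < 0) {x : ℝ} (hx : x ∈ Ioo a b) (hxc : x ≠ c) :
    f x < f c := by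
  rcases hxc.lt_or_gt with h | h
  · refine strictMonoOn_of_deriv_pos (convex_Ioc a c)
      (hf.mono fun y hy => ⟨hy.1, hy.2.trans_lt hc.2⟩) (by rwa [interior_Ioc])
      ⟨hx.1, h.le⟩ ⟨hc.1, le_rfl⟩ h
  · refine strictAntiOn_of_deriv_neg (convex_Ico c b)
      (hf.mono fun y hy => ⟨hc.1.trans_le hy.1, hy.2⟩) (by rwa [interior_Ico])
      ⟨le_rfl, hc.2⟩ ⟨h.le, hx.2⟩ h

theorem sSup_image_eq_of_forall_lt {α β : Type*} [ConditionallyCompleteLinearOrder β]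
    {f : α → β} {s : Set α} {c : α} (hc : c ∈ s) (h : ∀ x ∈ s, x ≠ c → f x < f c) :
    sSup (f '' s) = f c := by
  refine IsGreatest.csSup_eq ⟨mem_image_of_mem f hc, ?_⟩
  rintro _ ⟨x, hx, rfl⟩
  rcases eq_or_ne x c with rfl | hne
  exacts [le_rfl, (h x hx hne).le]

/-- The function `f₁(λ) = (1−λ)(log(1−λ))²/λ` on `(0,1)` has a unique critical point
`λ̃₁ ∈ (1/2, 1)`, characterized by `−2λ̃₁ − log(1−λ̃₁) = 0`; `f₁` increases before it,
decreases after it, and it is the unique maximizer of `f₁` on `(0,1)`. -/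
theorem stmt_6 (f₁ : ℝ → ℝ)
    (hf₁ : ∀ l, f₁ l = (1 - l) * (Real.log (1 - l)) ^ 2 / l) :
    ∃ l₁ : ℝ,
      (l₁ ∈ Set.Ioo (0 : ℝ) 1 ∧ -2 * l₁ - Real.log (1 - l₁) = 0) ∧
      (∀ l ∈ Set.Ioo (0 : ℝ) 1, -2 * l - Real.log (1 - l) = 0 → l = l₁) ∧
      l₁ ∈ Set.Ioo (1 / 2 : ℝ) 1 ∧
      (∀ l ∈ Set.Ioo (0 : ℝ) l₁, 0 < deriv f₁ l) ∧
      (∀ l ∈ Set.Ioo l₁ 1, deriv f₁ l < 0) ∧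
      sSup (f₁ '' Set.Ioo (0 : ℝ) 1) = f₁ l₁ ∧
      (∀ l ∈ Set.Ioo (0 : ℝ) 1, l ≠ l₁ → f₁ l < f₁ l₁) := by
  obtain ⟨c, hc, hc0⟩ := exists_critFun_eq_zero
  have hc₀ : c ∈ Ioo (0 : ℝ) 1 := ⟨by linarith [hc.1], hc.2⟩
  have hderiv_pos : ∀ l ∈ Ioo 0 c, 0 < deriv f₁ l := fun l hl => funext hf₁ ▸
    deriv_f₁_pos ⟨hl.1, hl.2.trans hc.2⟩ (critFun_neg_of_mem_Ioo hc.2 hc0 hl)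
  have hderiv_neg : ∀ l ∈ Ioo c 1, deriv f₁ l < 0 := fun l hl => funext hf₁ ▸
    deriv_f₁_neg ⟨hc₀.1.trans hl.1, hl.2⟩ (critFun_pos_of_mem_Ioo hc₀.1 hc0 hl)
  have hmax : ∀ l ∈ Ioo 0 1, l ≠ c → f₁ l < f₁ c := fun l hl =>
    lt_of_deriv_pos_of_deriv_neg (funext hf₁ ▸ continuousOn_f₁) hc₀ hderiv_pos hderiv_neg hl
  exact ⟨c, ⟨hc₀, hc0⟩, fun l hl hl0 => eq_of_critFun_eq_zero hc₀ hc0 hl hl0, hc,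
    hderiv_pos, hderiv_neg, sSup_image_eq_of_forall_lt hc₀ hmax, hmax⟩
end

section
/- Let f_2(λ) := λ·(log λ)²/(1−λ) for λ ∈ (0,1). There exists a unique λ̃_2 ∈ (0,1) such that log λ̃_2 + 2 − 2λ̃_2 = 0 (numerically λ̃_2 ≈ 0.2032), and λ̃_2 ∈ (0, 1/2). Moreover f_2′(λ) > 0 for λ ∈ (0, λ̃_2) and f_2′(λ) < 0 for λ ∈ (λ̃_2, 1), so that sup_{λ∈(0,1)} f_2(λ) = f_2(λ̃_2) and λ̃_2 is the unique maximizer of f_2 on (0,1). -/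
/-!
Writing `g₂ λ = log λ + 2 - 2λ`, one computes `f₂'(λ) = log λ · g₂(λ) / (1 - λ)²`, and `log λ < 0`
on `(0,1)`, so `f₂'` has the sign opposite to `g₂`. Since `g₂' = 1/λ - 2`, `g₂` increases on
`(0, 1/2]` and decreases on `[1/2, 1]` down to `g₂ 1 = 0`; as `g₂ (e⁻²) < 0 < g₂ (1/2)`, it has
exactly one zero `λ̃₂` in `(0,1)`, lying in `(e⁻², 1/2)`, is negative before it and positive after it.
Hence `f₂` increases up to `λ̃₂` and decreases after it.
-/

open Set Real

lemma apply_lt_of_deriv_pos_of_deriv_neg {f : ℝ → ℝ} {a b c : ℝ} (hc : c ∈ Ioo a b)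
    (hf : ContinuousOn f (Ioo a b)) (hpos : ∀ x ∈ Ioo a c, 0 < deriv f x)
    (hneg : ∀ x ∈ Ioo c b, deriv f x < 0) : ∀ x ∈ Ioo a b, x ≠ c → f x < f c := by
  have hmono : StrictMonoOn f (Ioc a c) :=
    strictMonoOn_of_deriv_pos (convex_Ioc a c) (hf.mono fun x hx => ⟨hx.1, hx.2.trans_lt hc.2⟩)
      (by simpa only [interior_Ioc] using hpos)
  have hanti : StrictAntiOn f (Ico c b) :=
    strictAntiOn_of_deriv_neg (convex_Ico c b) (hf.mono fun x hx => ⟨hc.1.trans_le hx.1, hx.2⟩)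
      (by simpa only [interior_Ico] using hneg)
  intro x hx hxc
  rcases hxc.lt_or_gt with h | h
  · exact hmono ⟨hx.1, h.le⟩ ⟨hc.1, le_rfl⟩ h
  · exact hanti ⟨le_rfl, hc.2⟩ ⟨h.le, hx.2⟩ h

noncomputable def g₂ (l : ℝ) : ℝ := log l + 2 - 2 * l

lemma hasDerivAt_g₂ {x : ℝ} (hx : 0 < x) : HasDerivAt g₂ (x⁻¹ - 2) x := by
  have h := ((hasDerivAt_log hx.ne').add_const 2).sub ((hasDerivAt_id' x).const_mul 2)
  rw [mul_one] at h
  exact h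

lemma continuousOn_g₂ {s : Set ℝ} (hs : s ⊆ Ioi 0) : ContinuousOn g₂ s :=
  fun _ hx => (hasDerivAt_g₂ (hs hx)).continuousAt.continuousWithinAt

lemma g₂_one : g₂ 1 = 0 := by norm_num [g₂]

lemma strictMonoOn_g₂ : StrictMonoOn g₂ (Ioc 0 (1 / 2)) := by
  refine strictMonoOn_of_deriv_pos (convex_Ioc _ _) (continuousOn_g₂ fun x hx => hx.1) ?_
  intro x hx
  rw [interior_Ioc] at hx
  rw [(hasDerivAt_g₂ hx.1).deriv, sub_pos, lt_inv_comm₀ two_pos hx.1]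
  linarith [hx.2]

lemma strictAntiOn_g₂ : StrictAntiOn g₂ (Ici (1 / 2)) := by
  have hpos : Ici (1 / 2 : ℝ) ⊆ Ioi 0 := fun x hx => (by norm_num : (0 : ℝ) < 1 / 2).trans_le hx
  refine strictAntiOn_of_deriv_neg (convex_Ici _) (continuousOn_g₂ hpos) ?_
  intro x hx
  rw [interior_Ici] at hx
  have hx0 : 0 < x := hpos (mem_Ici.2 (le_of_lt hx))
  rw [(hasDerivAt_g₂ hx0).deriv, sub_neg, inv_lt_comm₀ hx0 two_pos, ← one_div]
  exact hx

lemma exists_g₂_eq_zero : ∃ l ∈ Ioo 0 (1 / 2), g₂ l = 0 := by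
  have hexp : exp (-2) < 1 / 2 := by
    rw [exp_neg, one_div]
    exact inv_strictAnti₀ two_pos (by linarith [add_one_lt_exp (two_ne_zero (α := ℝ))])
  have hleft : g₂ (exp (-2)) < 0 := by
    simp only [g₂, log_exp]
    linarith [exp_pos (-2)]
  have hright : 0 < g₂ (1 / 2) := by
    simp only [g₂, one_div, log_inv]
    linarith [log_two_lt_d9]
  obtain ⟨l, hl, hl0⟩ := intermediate_value_Ioo hexp.le
    (continuousOn_g₂ fun x hx => (exp_pos _).trans_le hx.1) ⟨hleft, hright⟩
  exact ⟨l, ⟨(exp_pos _).trans hl.1, hl.2⟩, hl0⟩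

lemma g₂_neg_of_lt_of_g₂_eq_zero {l₀ l : ℝ} (hl₀ : l₀ ≤ 1 / 2) (h₀ : g₂ l₀ = 0) (hl : 0 < l)
    (hll₀ : l < l₀) : g₂ l < 0 :=
  h₀ ▸ strictMonoOn_g₂ ⟨hl, by linarith⟩ ⟨hl.trans hll₀, hl₀⟩ hll₀

lemma g₂_pos_of_gt_of_g₂_eq_zero {l₀ l : ℝ} (hl₀ : l₀ ∈ Ioc 0 (1 / 2)) (h₀ : g₂ l₀ = 0)
    (hl₀l : l₀ < l) (hl : l < 1) : 0 < g₂ l := by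
  rcases le_or_gt l (1 / 2) with h | h
  · exact h₀ ▸ strictMonoOn_g₂ hl₀ ⟨hl₀.1.trans hl₀l, h⟩ hl₀l
  · exact g₂_one ▸ strictAntiOn_g₂ h.le (by norm_num : (1 / 2 : ℝ) ≤ 1) hl

lemma hasDerivAt_mul_log_sq_div_one_sub {x : ℝ} (hx0 : 0 < x) (hx1 : x < 1) :
    HasDerivAt (fun l => l * log l ^ 2 / (1 - l)) (log x * g₂ x / (1 - x) ^ 2) x := by
  have hne : 1 - x ≠ 0 := by linarith
  have h := ((hasDerivAt_id' x).mul ((hasDerivAt_log hx0.ne').pow 2)).div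
    ((hasDerivAt_id' x).const_sub 1) hne
  refine h.congr_deriv ?_
  simp only [g₂, Pi.mul_apply, Pi.pow_apply]
  field_simp
  ring

lemma deriv_mul_log_sq_div_one_sub_pos {x : ℝ} (hx0 : 0 < x) (hx1 : x < 1) (hg : g₂ x < 0) :
    0 < deriv (fun l => l * log l ^ 2 / (1 - l)) x := by
  rw [(hasDerivAt_mul_log_sq_div_one_sub hx0 hx1).deriv]
  exact div_pos (mul_pos_of_neg_of_neg (log_neg hx0 hx1) hg) (by nlinarith)

lemma deriv_mul_log_sq_div_one_sub_neg {x : ℝ} (hx0 : 0 < x) (hx1 : x < 1) (hg : 0 < g₂ x) :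
    deriv (fun l => l * log l ^ 2 / (1 - l)) x < 0 := by
  rw [(hasDerivAt_mul_log_sq_div_one_sub hx0 hx1).deriv]
  exact div_neg_of_neg_of_pos (mul_neg_of_neg_of_pos (log_neg hx0 hx1) hg) (by nlinarith)

/-- The function `f₂(λ) = λ(log λ)²/(1−λ)` on `(0,1)` has a unique critical point
`λ̃₂ ∈ (0, 1/2)`, characterized by `log λ̃₂ + 2 − 2λ̃₂ = 0`; `f₂` increases before it,
decreases after it, and it is the unique maximizer of `f₂` on `(0,1)`. -/
theorem stmt_7 (f₂ : ℝ → ℝ)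
    (hf₂ : ∀ l, f₂ l = l * (Real.log l) ^ 2 / (1 - l)) :
    ∃ l₂ : ℝ,
      (l₂ ∈ Set.Ioo (0 : ℝ) 1 ∧ Real.log l₂ + 2 - 2 * l₂ = 0) ∧
      (∀ l ∈ Set.Ioo (0 : ℝ) 1, Real.log l + 2 - 2 * l = 0 → l = l₂) ∧
      l₂ ∈ Set.Ioo (0 : ℝ) (1 / 2) ∧
      (∀ l ∈ Set.Ioo (0 : ℝ) l₂, 0 < deriv f₂ l) ∧
      (∀ l ∈ Set.Ioo l₂ 1, deriv f₂ l < 0) ∧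
      sSup (f₂ '' Set.Ioo (0 : ℝ) 1) = f₂ l₂ ∧
      (∀ l ∈ Set.Ioo (0 : ℝ) 1, l ≠ l₂ → f₂ l < f₂ l₂) := by
  obtain rfl : f₂ = fun l => l * log l ^ 2 / (1 - l) := funext hf₂
  obtain ⟨l₂, ⟨h0, hhalf⟩, hroot⟩ := exists_g₂_eq_zero
  have hmem : l₂ ∈ Ioo (0 : ℝ) 1 := ⟨h0, by linarith⟩
  have hg_neg : ∀ l ∈ Ioo 0 l₂, g₂ l < 0 := fun l hl =>
    g₂_neg_of_lt_of_g₂_eq_zero hhalf.le hroot hl.1 hl.2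
  have hg_pos : ∀ l ∈ Ioo l₂ 1, 0 < g₂ l := fun l hl =>
    g₂_pos_of_gt_of_g₂_eq_zero ⟨h0, hhalf.le⟩ hroot hl.1 hl.2
  have hderiv_pos : ∀ l ∈ Ioo 0 l₂, 0 < deriv (fun l => l * log l ^ 2 / (1 - l)) l := fun l hl =>
    deriv_mul_log_sq_div_one_sub_pos hl.1 (hl.2.trans hmem.2) (hg_neg l hl)
  have hderiv_neg : ∀ l ∈ Ioo l₂ 1, deriv (fun l => l * log l ^ 2 / (1 - l)) l < 0 := fun l hl =>
    deriv_mul_log_sq_div_one_sub_neg (h0.trans hl.1) hl.2 (hg_pos l hl)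
  have hmax := apply_lt_of_deriv_pos_of_deriv_neg hmem (fun l hl =>
    (hasDerivAt_mul_log_sq_div_one_sub hl.1 hl.2).continuousAt.continuousWithinAt)
    hderiv_pos hderiv_neg
  have hgreatest : IsGreatest ((fun l => l * log l ^ 2 / (1 - l)) '' Ioo 0 1)
      (l₂ * log l₂ ^ 2 / (1 - l₂)) := by
    refine ⟨mem_image_of_mem _ hmem, forall_mem_image.2 fun l hl => ?_⟩
    rcases eq_or_ne l l₂ with rfl | h
    · exact le_rfl
    · exact (hmax l hl h).le
  refine ⟨l₂, ⟨hmem, hroot⟩, fun l hl hgl => ?_, ⟨h0, hhalf⟩, hderiv_pos, hderiv_neg,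
    hgreatest.csSup_eq, hmax⟩
  rcases lt_trichotomy l l₂ with h | h | h
  · exact absurd hgl (hg_neg l ⟨hl.1, h⟩).ne
  · exact h
  · exact absurd hgl (hg_pos l ⟨h, hl.2⟩).ne'
end

section
/- Consider the Weibull scale family F_θ(x) := 1 − exp(−(x/θ)^ρ) for x > 0, with shape ρ > 0 and scale parameter θ ∈ (0,∞). Fix λ ∈ (0,1) and θ_0 > 0, and let h_{λ,θ_0}(θ) := F_{θ_0}(F_θ^{−1}(λ)). Then h_{λ,θ_0}(θ) = 1 − (1−λ)^{(θ/θ_0)^ρ}, and the second derivative at θ = θ_0 of the rate function I_{λ,θ_0}(θ) := H(λ|h_{λ,θ_0}(θ)) equals I_{λ,θ_0}″(θ_0) = ρ²·(1−λ)·(log(1−λ))²/(λ·θ_0²). Moreover, as a function of λ ∈ (0,1), I_{λ,θ_0}″(θ_0) is uniquely maximized at λ = λ̃_1, where λ̃_1 ∈ (1/2,1) is the unique root of −2λ − log(1−λ) = 0 (independently of ρ and θ_0). -/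
/-!
Since `h_{λ,θ₀}(θ₀) = λ` and `q ↦ H(λ|q)` is stationary at `q = λ` with second derivative
`1/(λ(1-λ))`, the chain rule gives `I''(θ₀) = h'(θ₀)² / (λ(1-λ))`; for the Weibull family
`h'(θ₀) = -ρ(1-λ)log(1-λ)/θ₀`. Up to the factor `ρ²/θ₀²` the curvature is
`g(λ) = (1-λ)log²(1-λ)/λ`, with `g'(λ) = log(1-λ)·(-2λ - log(1-λ))/λ²`. The second factor
vanishes at `0`, decreases on `[0, 1/2]` and increases on `[1/2, 1)`, so it has a single root
`λ̃₁` in `(1/2, 1)`, is negative before it and positive after it: `g` increases up to `λ̃₁`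
and decreases afterwards.
-/

open Set

/-- Relative entropy `H(p|q)` of the Bernoulli(`p`) law w.r.t. the Bernoulli(`q`) law. -/
noncomputable def relEntBer (p q : ℝ) : ℝ :=
  p * Real.log (p / q) + (1 - p) * Real.log ((1 - p) / (1 - q))

open Real Filter Topology

theorem mul_log_div {a b : ℝ} (hb : b ≠ 0) : a * log (a / b) = a * log a - a * log b := by
  rcases eq_or_ne a 0 with rfl | ha
  · simp
  · rw [log_div ha hb]; ring

theorem relEntBer_eq {p q : ℝ} (hq0 : q ≠ 0) (hq1 : 1 - q ≠ 0) :
    relEntBer p q = p * log p + (1 - p) * log (1 - p) - p * log q - (1 - p) * log (1 - q) := by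
  rw [relEntBer, mul_log_div hq0, mul_log_div hq1]; ring

theorem hasDerivAt_relEntBer (p : ℝ) {q : ℝ} (hq : q ∈ Ioo 0 1) :
    HasDerivAt (relEntBer p) ((q - p) / (q * (1 - q))) q := by
  have hq0 : q ≠ 0 := hq.1.ne'
  have hq1 : 1 - q ≠ 0 := (sub_pos.2 hq.2).ne'
  have heq : (fun r => p * log p + (1 - p) * log (1 - p) - p * log r - (1 - p) * log (1 - r))
      =ᶠ[𝓝 q] relEntBer p :=
    eventually_of_mem (Ioo_mem_nhds hq.1 hq.2) fun r hr =>
      (relEntBer_eq hr.1.ne' (sub_pos.2 hr.2).ne').symm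
  have hlog1 : HasDerivAt (fun r => log (1 - r)) (-1 / (1 - q)) q :=
    ((hasDerivAt_id q).const_sub 1).log hq1
  refine ((((hasDerivAt_const q _).sub ((hasDerivAt_log hq0).const_mul p)).sub
    (hlog1.const_mul (1 - p))).congr_of_eventuallyEq heq.symm).congr_deriv ?_
  field_simp
  ring

theorem hasDerivAt_deriv_comp {f f' g g' : ℝ → ℝ} {x a b : ℝ}
    (hf : ∀ᶠ y in 𝓝 x, HasDerivAt f (f' (g y)) (g y))
    (hg : ∀ᶠ y in 𝓝 x, HasDerivAt g (g' y) y)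
    (hf' : HasDerivAt f' a (g x)) (hg' : HasDerivAt g' b x) :
    HasDerivAt (deriv (f ∘ g)) (a * g' x * g' x + f' (g x) * b) x := by
  have hderiv : (fun y => f' (g y) * g' y) =ᶠ[𝓝 x] deriv (f ∘ g) :=
    (hf.and hg).mono fun y hy => ((hy.1.comp y hy.2).deriv).symm
  exact ((hf'.comp x hg.self_of_nhds).mul hg').congr_of_eventuallyEq hderiv.symm

theorem deriv_deriv_relEntBer_comp {p x : ℝ} {g g' : ℝ → ℝ} (hp : p ∈ Ioo 0 1)
    (hgx : g x = p) (hg : ∀ᶠ y in 𝓝 x, HasDerivAt g (g' y) y)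
    (hg' : DifferentiableAt ℝ g' x) :
    deriv (deriv fun y => relEntBer p (g y)) x = g' x ^ 2 / (p * (1 - p)) := by
  have hgmem : ∀ᶠ y in 𝓝 x, g y ∈ Ioo 0 1 :=
    hg.self_of_nhds.continuousAt.eventually_mem (hgx ▸ Ioo_mem_nhds hp.1 hp.2)
  have hp0 : p ≠ 0 := hp.1.ne'
  have hp1 : 1 - p ≠ 0 := (sub_pos.2 hp.2).ne'
  have hf' : HasDerivAt (fun q => (q - p) / (q * (1 - q))) (1 / (p * (1 - p))) (g x) := by
    rw [hgx]
    refine (((hasDerivAt_id p).sub_const p).div ((hasDerivAt_id p).mul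
      ((hasDerivAt_id p).const_sub 1)) (mul_ne_zero hp0 hp1)).congr_deriv ?_
    simp only [Pi.mul_apply, id_eq]
    field_simp
    ring
  have hsecond := hasDerivAt_deriv_comp (hgmem.mono fun y hy => hasDerivAt_relEntBer p hy) hg
    hf' hg'.hasDerivAt
  rw [show (fun y => relEntBer p (g y)) = relEntBer p ∘ g from rfl, hsecond.deriv, hgx]
  field_simp
  ring

theorem one_sub_exp_neg_quantile_rpow {ρ θ₀ θ l : ℝ} (hρ : 0 < ρ) (hθ₀ : 0 < θ₀) (hθ : 0 < θ)
    (hl0 : 0 ≤ l) (hl1 : l < 1) :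
    1 - exp (-(θ * (-log (1 - l)) ^ (1 / ρ) / θ₀) ^ ρ) = 1 - (1 - l) ^ ((θ / θ₀) ^ ρ) := by
  have hL : 0 ≤ -log (1 - l) := neg_nonneg.2 (log_nonpos (by linarith) (by linarith))
  rw [mul_div_right_comm, mul_rpow (div_pos hθ hθ₀).le (rpow_nonneg hL _), ← rpow_mul hL,
    one_div_mul_cancel hρ.ne', rpow_one, rpow_def_of_pos (x := 1 - l) (by linarith)]
  ring_nf

theorem hasDerivAt_one_sub_rpow_div_rpow {a θ₀ ρ θ : ℝ} (ha : 0 < a) (hθ₀ : 0 < θ₀)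
    (hθ : 0 < θ) :
    HasDerivAt (fun θ => 1 - a ^ ((θ / θ₀) ^ ρ))
      (-(log a * (ρ / θ₀ * (θ / θ₀) ^ (ρ - 1)) * a ^ ((θ / θ₀) ^ ρ))) θ := by
  have hs := ((hasDerivAt_id θ).div_const θ₀).rpow_const (p := ρ) (Or.inl (div_pos hθ hθ₀).ne')
  refine ((hs.const_rpow ha).const_sub 1).congr_deriv ?_
  simp only [id_eq]
  ring

theorem deriv_deriv_relEntBer_one_sub_rpow {ρ θ₀ l : ℝ} (hθ₀ : 0 < θ₀) (hl : l ∈ Ioo 0 1)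
    {q : ℝ → ℝ} (hq : ∀ θ, 0 < θ → q θ = 1 - (1 - l) ^ ((θ / θ₀) ^ ρ)) :
    deriv (deriv fun θ => relEntBer l (q θ)) θ₀ =
      ρ ^ 2 * (1 - l) * log (1 - l) ^ 2 / (l * θ₀ ^ 2) := by
  have ha : 0 < 1 - l := sub_pos.2 hl.2
  have hqθ₀ : q θ₀ = l := by rw [hq θ₀ hθ₀, div_self hθ₀.ne', one_rpow, rpow_one]; ring
  have hq' : ∀ᶠ θ in 𝓝 θ₀, HasDerivAt q
      (-(log (1 - l) * (ρ / θ₀ * (θ / θ₀) ^ (ρ - 1)) * (1 - l) ^ ((θ / θ₀) ^ ρ))) θ :=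
    eventually_of_mem (Ioi_mem_nhds hθ₀) fun θ hθ =>
      (hasDerivAt_one_sub_rpow_div_rpow ha hθ₀ hθ).congr_of_eventuallyEq
        (eventually_of_mem (Ioi_mem_nhds hθ) hq)
  rw [deriv_deriv_relEntBer_comp hl hqθ₀ hq' (by fun_prop (disch := simp [hθ₀.ne', ha.ne'])),
    div_self hθ₀.ne', one_rpow, one_rpow, rpow_one]
  field_simp

noncomputable def curvProfile (l : ℝ) : ℝ := (1 - l) * log (1 - l) ^ 2 / l

noncomputable def curvProfileCrit (l : ℝ) : ℝ := -2 * l - log (1 - l)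

theorem hasDerivAt_curvProfileCrit {l : ℝ} (hl : l < 1) :
    HasDerivAt curvProfileCrit ((2 * l - 1) / (1 - l)) l := by
  have hl' : 1 - l ≠ 0 := (sub_pos.2 hl).ne'
  refine (((hasDerivAt_id l).const_mul (-2)).sub
    (((hasDerivAt_id l).const_sub 1).log hl')).congr_deriv ?_
  simp only [id_eq]
  field_simp
  ring

theorem continuousOn_curvProfileCrit : ContinuousOn curvProfileCrit (Iio 1) :=
  fun _ hl => (hasDerivAt_curvProfileCrit hl).continuousAt.continuousWithinAt

theorem strictAntiOn_curvProfileCrit : StrictAntiOn curvProfileCrit (Icc 0 (1 / 2)) := by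
  refine strictAntiOn_of_deriv_neg (convex_Icc _ _)
    (continuousOn_curvProfileCrit.mono fun l hl => by simp only [mem_Iio]; linarith [hl.2])
    fun l hl => ?_
  rw [interior_Icc] at hl
  rw [(hasDerivAt_curvProfileCrit (by linarith [hl.2])).deriv]
  exact div_neg_of_neg_of_pos (by linarith [hl.2]) (by linarith [hl.2])

theorem strictMonoOn_curvProfileCrit : StrictMonoOn curvProfileCrit (Ico (1 / 2) 1) := by
  refine strictMonoOn_of_deriv_pos (convex_Ico _ _)
    (continuousOn_curvProfileCrit.mono fun l hl => hl.2) fun l hl => ?_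
  rw [interior_Ico] at hl
  rw [(hasDerivAt_curvProfileCrit hl.2).deriv]
  exact div_pos (by linarith [hl.1]) (by linarith [hl.2])

theorem exists_curvProfileCrit_eq_zero : ∃ l₁ ∈ Ioo (1 / 2 : ℝ) 1, curvProfileCrit l₁ = 0 := by
  have he : exp (-2) < 1 / 2 := by
    rw [exp_neg, inv_lt_comm₀ (exp_pos 2) (by norm_num)]
    linarith [add_one_le_exp (2 : ℝ)]
  have hhalf : curvProfileCrit (1 / 2) < 0 := by
    rw [curvProfileCrit, show (1 : ℝ) - 1 / 2 = 2⁻¹ by norm_num, log_inv]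
    linarith [log_two_lt_d9]
  have hb : 0 < curvProfileCrit (1 - exp (-2)) := by
    rw [curvProfileCrit, sub_sub_cancel, log_exp]
    linarith [exp_pos (-2)]
  obtain ⟨l₁, hl₁, hroot⟩ := intermediate_value_Ioo (by linarith)
    (continuousOn_curvProfileCrit.mono fun l hl => by
      simp only [mem_Iio]; linarith [hl.2, exp_pos (-2)]) ⟨hhalf, hb⟩
  exact ⟨l₁, ⟨hl₁.1, by linarith [hl₁.2, exp_pos (-2)]⟩, hroot⟩

theorem hasDerivAt_curvProfile {l : ℝ} (hl : l ∈ Ioo 0 1) :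
    HasDerivAt curvProfile (log (1 - l) * curvProfileCrit l / l ^ 2) l := by
  have hl' : 1 - l ≠ 0 := (sub_pos.2 hl.2).ne'
  have hlog := ((hasDerivAt_id l).const_sub 1).log hl'
  refine ((((hasDerivAt_id l).const_sub 1).mul (hlog.pow 2)).div (hasDerivAt_id l)
    hl.1.ne').congr_deriv ?_
  simp only [curvProfileCrit, Pi.mul_apply, Pi.pow_apply, id_eq]
  field_simp
  ring

theorem curvProfile_lt_of_curvProfileCrit_eq_zero {l₁ : ℝ} (hl₁ : l₁ ∈ Ioo (1 / 2) 1)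
    (hroot : curvProfileCrit l₁ = 0) {l : ℝ} (hl : l ∈ Ioo 0 1) (hne : l ≠ l₁) :
    curvProfile l < curvProfile l₁ := by
  have hcrit_neg : ∀ l ∈ Ioo 0 l₁, curvProfileCrit l < 0 := by
    intro l hl
    rcases le_or_gt l (1 / 2) with hle | hgt
    · simpa [curvProfileCrit] using
        strictAntiOn_curvProfileCrit ⟨le_rfl, by norm_num⟩ ⟨hl.1.le, hle⟩ hl.1
    · exact hroot ▸ strictMonoOn_curvProfileCrit ⟨hgt.le, hl.2.trans hl₁.2⟩
        ⟨hl₁.1.le, hl₁.2⟩ hl.2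
  have hcrit_pos : ∀ l ∈ Ioo l₁ 1, 0 < curvProfileCrit l := fun l hl =>
    hroot ▸ strictMonoOn_curvProfileCrit ⟨hl₁.1.le, hl₁.2⟩ ⟨by linarith [hl₁.1, hl.1], hl.2⟩ hl.1
  have hlog : ∀ l ∈ Ioo (0 : ℝ) 1, log (1 - l) < 0 := fun l hl =>
    log_neg (by linarith [hl.2]) (by linarith [hl.1])
  have hmono : StrictMonoOn curvProfile (Ioc 0 l₁) := by
    refine strictMonoOn_of_deriv_pos (convex_Ioc _ _) (fun l hl => ?_) fun l hl => ?_
    · exact (hasDerivAt_curvProfile ⟨hl.1, hl.2.trans_lt hl₁.2⟩).continuousAt.continuousWithinAt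
    · rw [interior_Ioc] at hl
      have hl01 : l ∈ Ioo (0 : ℝ) 1 := ⟨hl.1, hl.2.trans hl₁.2⟩
      rw [(hasDerivAt_curvProfile hl01).deriv]
      exact div_pos (mul_pos_of_neg_of_neg (hlog l hl01) (hcrit_neg l hl)) (pow_pos hl.1 2)
  have hanti : StrictAntiOn curvProfile (Ico l₁ 1) := by
    refine strictAntiOn_of_deriv_neg (convex_Ico _ _) (fun l hl => ?_) fun l hl => ?_
    · exact (hasDerivAt_curvProfile ⟨by linarith [hl₁.1, hl.1], hl.2⟩).continuousAt
        |>.continuousWithinAt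
    · rw [interior_Ico] at hl
      have hl01 : l ∈ Ioo (0 : ℝ) 1 := ⟨by linarith [hl₁.1, hl.1], hl.2⟩
      rw [(hasDerivAt_curvProfile hl01).deriv]
      exact div_neg_of_neg_of_pos (mul_neg_of_neg_of_pos (hlog l hl01) (hcrit_pos l hl))
        (pow_pos hl01.1 2)
  rcases hne.lt_or_gt with hlt | hgt
  · exact hmono ⟨hl.1, hlt.le⟩ ⟨by linarith [hl₁.1], le_rfl⟩ hlt
  · exact hanti ⟨le_rfl, hl₁.2⟩ ⟨hgt.le, hl.2⟩ hgt

/-- Weibull scale family `F_θ(x) = 1 − exp(−(x/θ)^ρ)`: the function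
`h_{λ,θ₀}(θ) = F_{θ₀}(F_θ^{-1}(λ))`, the curvature `I_{λ,θ₀}''(θ₀)` of the
method-of-quantiles rate function, and its unique maximizer `λ̃₁` in `λ`. -/
theorem stmt_9 (ρ θ₀ : ℝ) (hρ : 0 < ρ) (hθ₀ : 0 < θ₀)
    (lam : ℝ) (hlam : lam ∈ Set.Ioo (0 : ℝ) 1)
    (F : ℝ → ℝ → ℝ) (hF : ∀ θ x, F θ x = 1 - Real.exp (-(x / θ) ^ ρ))
    -- `Q l θ = F_θ^{-1}(l) = θ·(−log(1−l))^{1/ρ}`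
    (Q : ℝ → ℝ → ℝ) (hQ : ∀ l θ, Q l θ = θ * (-Real.log (1 - l)) ^ (1 / ρ))
    (h : ℝ → ℝ → ℝ) (hh : ∀ l θ, h l θ = F θ₀ (Q l θ))
    -- `curv l = I_{l,θ₀}''(θ₀)` where `I_{l,θ₀}(θ) = H(l | h_{l,θ₀}(θ))`
    (curv : ℝ → ℝ)
    (hcurv : ∀ l, curv l = deriv (deriv fun θ => relEntBer l (h l θ)) θ₀) :
    (∀ θ : ℝ, 0 < θ → h lam θ = 1 - (1 - lam) ^ ((θ / θ₀) ^ ρ)) ∧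
    curv lam = ρ ^ 2 * (1 - lam) * (Real.log (1 - lam)) ^ 2 / (lam * θ₀ ^ 2) ∧
    ∃ l₁ : ℝ, l₁ ∈ Set.Ioo (1 / 2 : ℝ) 1 ∧ -2 * l₁ - Real.log (1 - l₁) = 0 ∧
      (∀ l ∈ Set.Ioo (1 / 2 : ℝ) 1, -2 * l - Real.log (1 - l) = 0 → l = l₁) ∧
      (∀ l ∈ Set.Ioo (0 : ℝ) 1, l ≠ l₁ → curv l < curv l₁) := by
  have hh_eq : ∀ l ∈ Ioo (0 : ℝ) 1, ∀ θ, 0 < θ → h l θ = 1 - (1 - l) ^ ((θ / θ₀) ^ ρ) :=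
    fun l hl θ hθ => by rw [hh, hF, hQ, one_sub_exp_neg_quantile_rpow hρ hθ₀ hθ hl.1.le hl.2]
  have hcurv_eq : ∀ l ∈ Ioo (0 : ℝ) 1, curv l = ρ ^ 2 / θ₀ ^ 2 * curvProfile l := fun l hl => by
    rw [hcurv, deriv_deriv_relEntBer_one_sub_rpow hθ₀ hl (hh_eq l hl), curvProfile]
    ring
  obtain ⟨l₁, hl₁, hroot⟩ := exists_curvProfileCrit_eq_zero
  refine ⟨hh_eq lam hlam, by rw [hcurv_eq lam hlam, curvProfile]; ring, l₁, hl₁, hroot,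
    fun l hl hl0 => strictMonoOn_curvProfileCrit.injOn ⟨hl.1.le, hl.2⟩ ⟨hl₁.1.le, hl₁.2⟩
      (hl0.trans hroot.symm), fun l hl hne => ?_⟩
  rw [hcurv_eq l hl, hcurv_eq l₁ ⟨by linarith [hl₁.1], hl₁.2⟩]
  exact mul_lt_mul_of_pos_left (curvProfile_lt_of_curvProfileCrit_eq_zero hl₁ hroot hl hne)
    (by positivity)
end

section
/- For every ρ > 0 one has Γ(1 + 2/ρ) − Γ²(1 + 1/ρ) > 0 (this quantity is θ^{−2} times the variance of a Weibull distribution with shape ρ and scale θ), and the function ρ ↦ Γ²(1 + 1/ρ)/(Γ(1 + 2/ρ) − Γ²(1 + 1/ρ)) is strictly increasing on (0, ∞). -/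
open Set

/-- `log ∘ Γ` is strictly convex on `(0, ∞)`. -/
lemma strictConvexOn_log_Gamma_aux :
    StrictConvexOn ℝ (Set.Ioi (0 : ℝ)) (Real.log ∘ Real.Gamma) := by
  have h1 : ConvexOn ℝ (Set.Ioi (0 : ℝ))
      (fun x : ℝ => Real.log (Real.Gamma (x + 1))) := by
    refine ⟨convex_Ioi 0, fun x hx y hy a b ha hb hab => ?_⟩
    have hx1 : x + 1 ∈ Set.Ioi (0 : ℝ) := by simp at hx ⊢; linarith
    have hy1 : y + 1 ∈ Set.Ioi (0 : ℝ) := by simp at hy ⊢; linarith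
    have := Real.convexOn_log_Gamma.2 hx1 hy1 ha hb hab
    simp only [Function.comp_apply, smul_eq_mul] at this ⊢
    have heq : a * (x + 1) + b * (y + 1) = a * x + b * y + 1 := by
      have : a * (x + 1) + b * (y + 1) = a * x + b * y + (a + b) := by ring
      rw [this, hab]
    rw [heq] at this
    exact this
  have h2 : StrictConvexOn ℝ (Set.Ioi (0 : ℝ)) (fun x : ℝ => -Real.log x) :=
    strictConcaveOn_log_Ioi.neg
  have h3 := h1.add_strictConvexOn h2
  have key : ∀ z ∈ Set.Ioi (0 : ℝ),
      Real.log (Real.Gamma z) = Real.log (Real.Gamma (z + 1)) + -Real.log z := by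
    intro z hz
    rw [Real.Gamma_add_one (ne_of_gt hz),
      Real.log_mul (ne_of_gt hz) (ne_of_gt (Real.Gamma_pos_of_pos hz))]
    ring
  refine ⟨convex_Ioi 0, fun x hx y hy hxy a b ha hb hab => ?_⟩
  have hmem : a • x + b • y ∈ Set.Ioi (0 : ℝ) :=
    (convex_Ioi (0 : ℝ)) hx hy ha.le hb.le hab
  have := h3.2 hx hy hxy ha hb hab
  simp only [Function.comp_apply, smul_eq_mul] at this ⊢
  simp only [smul_eq_mul] at hmem
  rw [key _ hx, key _ hy, key _ hmem]
  simp only [Pi.add_apply] at this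
  linarith

/-- For `t > 0`, `Γ(1+t)² < Γ(1+2t)`. -/
lemma Gamma_sq_lt (t : ℝ) (ht : 0 < t) :
    (Real.Gamma (1 + t)) ^ 2 < Real.Gamma (1 + 2 * t) := by
  have h1 : (1 : ℝ) ∈ Set.Ioi (0 : ℝ) := by simp
  have h2 : (1 + 2 * t : ℝ) ∈ Set.Ioi (0 : ℝ) := by simp; linarith
  have hne : (1 : ℝ) ≠ 1 + 2 * t := by intro h; linarith [h]
  have := strictConvexOn_log_Gamma_aux.2 h1 h2 hne (by norm_num : (0:ℝ) < 1/2)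
    (by norm_num : (0:ℝ) < 1/2) (by norm_num)
  simp only [Function.comp_apply, smul_eq_mul] at this
  have heq : (1/2 : ℝ) * 1 + (1/2 : ℝ) * (1 + 2 * t) = 1 + t := by ring
  rw [heq, Real.Gamma_one, Real.log_one] at this
  have hlog : Real.log ((Real.Gamma (1 + t)) ^ 2) < Real.log (Real.Gamma (1 + 2 * t)) := by
    rw [Real.log_pow]
    push_cast
    linarith
  have hp1 : 0 < (Real.Gamma (1 + t)) ^ 2 :=
    pow_pos (Real.Gamma_pos_of_pos (by linarith)) 2
  exact (Real.log_lt_log_iff hp1 (Real.Gamma_pos_of_pos (by linarith))).mp hlog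

/-- For `0 < x < y`, `Γ(1+2x)·Γ(1+y)² < Γ(1+2y)·Γ(1+x)²`. -/
lemma Gamma_ratio_lt {x y : ℝ} (hx : 0 < x) (hxy : x < y) :
    Real.Gamma (1 + 2 * x) * (Real.Gamma (1 + y)) ^ 2 <
      Real.Gamma (1 + 2 * y) * (Real.Gamma (1 + x)) ^ 2 := by
  have hy : 0 < y := hx.trans hxy
  set f : ℝ → ℝ := Real.log ∘ Real.Gamma with hf
  have m1 : (1 + x : ℝ) ∈ Set.Ioi (0 : ℝ) := by simp; linarith
  have m2 : (1 + y : ℝ) ∈ Set.Ioi (0 : ℝ) := by simp; linarith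
  have m3 : (1 + 2 * x : ℝ) ∈ Set.Ioi (0 : ℝ) := by simp; linarith
  have m4 : (1 + 2 * y : ℝ) ∈ Set.Ioi (0 : ℝ) := by simp; linarith
  -- slope(1+x, 1+y) < slope(1+x, 1+2y)
  have sA : (f (1 + y) - f (1 + x)) / ((1 + y) - (1 + x)) <
      (f (1 + 2 * y) - f (1 + x)) / ((1 + 2 * y) - (1 + x)) :=
    strictConvexOn_log_Gamma_aux.secant_strict_mono m1 m2 m4
      (by intro h; simp at h; linarith) (by intro h; simp at h; linarith)
      (by linarith)
  -- slope(1+2y, 1+x) < slope(1+2y, 1+2x)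
  have sB : (f (1 + x) - f (1 + 2 * y)) / ((1 + x) - (1 + 2 * y)) <
      (f (1 + 2 * x) - f (1 + 2 * y)) / ((1 + 2 * x) - (1 + 2 * y)) :=
    strictConvexOn_log_Gamma_aux.secant_strict_mono m4 m1 m3
      (by intro h; simp at h; linarith) (by intro h; simp at h; linarith)
      (by linarith)
  -- flip sB to slopes with positive denominators
  have sB' : (f (1 + 2 * y) - f (1 + x)) / ((1 + 2 * y) - (1 + x)) <
      (f (1 + 2 * y) - f (1 + 2 * x)) / ((1 + 2 * y) - (1 + 2 * x)) := by
    have e1 : (f (1 + x) - f (1 + 2 * y)) / ((1 + x) - (1 + 2 * y)) =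
        (f (1 + 2 * y) - f (1 + x)) / ((1 + 2 * y) - (1 + x)) := by
      rw [← neg_div_neg_eq]; ring_nf
    have e2 : (f (1 + 2 * x) - f (1 + 2 * y)) / ((1 + 2 * x) - (1 + 2 * y)) =
        (f (1 + 2 * y) - f (1 + 2 * x)) / ((1 + 2 * y) - (1 + 2 * x)) := by
      rw [← neg_div_neg_eq]; ring_nf
    rw [e1, e2] at sB
    exact sB
  have chain := sA.trans sB'
  -- clear denominators
  have hd1 : (0 : ℝ) < (1 + y) - (1 + x) := by linarith
  have hd2 : (0 : ℝ) < (1 + 2 * y) - (1 + 2 * x) := by linarith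
  rw [div_lt_div_iff₀ hd1 hd2] at chain
  -- chain : (f(1+y) - f(1+x)) * (2y - 2x) < (f(1+2y) - f(1+2x)) * (y - x)
  have hlog : 2 * f (1 + y) - 2 * f (1 + x) < f (1 + 2 * y) - f (1 + 2 * x) := by
    nlinarith [chain]
  -- exponentiate
  have p1 : 0 < Real.Gamma (1 + x) := Real.Gamma_pos_of_pos (by linarith)
  have p2 : 0 < Real.Gamma (1 + y) := Real.Gamma_pos_of_pos (by linarith)
  have p3 : 0 < Real.Gamma (1 + 2 * x) := Real.Gamma_pos_of_pos (by linarith)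
  have p4 : 0 < Real.Gamma (1 + 2 * y) := Real.Gamma_pos_of_pos (by linarith)
  have hlog' : Real.log (Real.Gamma (1 + 2 * x) * (Real.Gamma (1 + y)) ^ 2) <
      Real.log (Real.Gamma (1 + 2 * y) * (Real.Gamma (1 + x)) ^ 2) := by
    rw [Real.log_mul (ne_of_gt p3) (ne_of_gt (pow_pos p2 2)),
      Real.log_mul (ne_of_gt p4) (ne_of_gt (pow_pos p1 2)),
      Real.log_pow, Real.log_pow]
    push_cast
    simp only [hf, Function.comp_apply] at hlog
    linarith
  exact (Real.log_lt_log_iff (by positivity) (by positivity)).mp hlog'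

/-- For every `ρ > 0` one has `Γ(1 + 2/ρ) − Γ²(1 + 1/ρ) > 0`, and
`ρ ↦ Γ²(1 + 1/ρ)/(Γ(1 + 2/ρ) − Γ²(1 + 1/ρ))` is strictly increasing on `(0, ∞)`. -/
theorem stmt_11 :
    (∀ ρ : ℝ, 0 < ρ →
      0 < Real.Gamma (1 + 2 / ρ) - (Real.Gamma (1 + 1 / ρ)) ^ 2) ∧
    StrictMonoOn
      (fun ρ : ℝ =>
        (Real.Gamma (1 + 1 / ρ)) ^ 2 /
          (Real.Gamma (1 + 2 / ρ) - (Real.Gamma (1 + 1 / ρ)) ^ 2))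
      (Set.Ioi (0 : ℝ)) := by
  have pos : ∀ ρ : ℝ, 0 < ρ →
      0 < Real.Gamma (1 + 2 / ρ) - (Real.Gamma (1 + 1 / ρ)) ^ 2 := by
    intro ρ hρ
    have h := Gamma_sq_lt (1 / ρ) (by positivity)
    have : 2 * (1 / ρ) = 2 / ρ := by ring
    rw [this] at h
    linarith
  refine ⟨pos, ?_⟩
  intro a ha b hb hab
  simp only [Set.mem_Ioi] at ha hb
  have hx : (0 : ℝ) < 1 / b := by positivity
  have hxy : 1 / b < 1 / a := by
    apply one_div_lt_one_div_of_lt ha hab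
  have key := Gamma_ratio_lt hx hxy
  have e1 : 1 + 2 * (1 / b) = 1 + 2 / b := by ring_nf
  have e2 : 1 + 2 * (1 / a) = 1 + 2 / a := by ring_nf
  rw [e1, e2] at key
  -- key : Γ(1+2/b) * Γ(1+1/a)² < Γ(1+2/a) * Γ(1+1/b)²
  have Da := pos a ha
  have Db := pos b hb
  have p1a : 0 < (Real.Gamma (1 + 1 / a)) ^ 2 :=
    pow_pos (Real.Gamma_pos_of_pos (by positivity)) 2
  have p1b : 0 < (Real.Gamma (1 + 1 / b)) ^ 2 :=
    pow_pos (Real.Gamma_pos_of_pos (by positivity)) 2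
  simp only
  rw [div_lt_div_iff₀ Da Db]
  nlinarith [key, p1a, p1b]
end

section
/- Consider the Gumbel location family F_θ(x) := G(x − θ) with G(x) = exp(−e^{−x/s}) for a known scale s > 0 and location parameter θ ∈ ℝ. Fix λ ∈ (0,1) and θ_0 ∈ ℝ, and let h_{λ,θ_0}(θ) := F_{θ_0}(F_θ^{−1}(λ)) = G(θ + G^{−1}(λ) − θ_0). Then the second derivative at θ = θ_0 of the rate function I_{λ,θ_0}(θ) := H(λ|h_{λ,θ_0}(θ)) equals I_{λ,θ_0}″(θ_0) = (G′(G^{−1}(λ)))²/(λ(1−λ)) = λ·(log λ)²/(s²(1−λ)). Moreover, as a function of λ ∈ (0,1), I_{λ,θ_0}″(θ_0) is uniquely maximized at λ = λ̃_2, the unique root in (0,1/2) of log λ + 2 − 2λ = 0, and I_{λ̃_2,θ_0}″(θ_0) = 4λ̃_2(1−λ̃_2)/s². -/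
open Set

/-!
With `q θ₀ = l`, the first derivative of `θ ↦ H(l | q θ)` is `q' · (q - l) / (q (1 - q))`; the
second factor vanishes at `θ₀`, so the second derivative there is the Bernoulli Fisher information
`q'(θ₀)² / (l (1 - l))`. For the Gumbel family `q'(θ₀) = G'(G⁻¹(l)) = -l log l / s`, so
`s² I'' = l log² l / (1 - l)`, whose derivative is `log l · (log l + 2 - 2l) / (1 - l)²`. The concave
function `log l + 2 - 2l` vanishes at `1` and at a single `l₂ ∈ (0, 1/2)`, is negative before `l₂` and
positive on `(l₂, 1)`, so `l₂` is the unique maximiser, and `log l₂ = 2 l₂ - 2` gives the value.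
-/

open Real

theorem hasDerivAt_relEntBer_s14 {l x : ℝ} (hl0 : l ≠ 0) (hl1 : l ≠ 1) (hx0 : x ≠ 0) (hx1 : x ≠ 1) :
    HasDerivAt (relEntBer l) ((x - l) / (x * (1 - x))) x := by
  have hl1' : 1 - l ≠ 0 := sub_ne_zero.mpr hl1.symm
  have hx1' : 1 - x ≠ 0 := sub_ne_zero.mpr hx1.symm
  have hfirst := ((hasDerivAt_const x l).div (hasDerivAt_id x) hx0).log (div_ne_zero hl0 hx0)
  have hsecond := ((hasDerivAt_const x (1 - l)).div ((hasDerivAt_id x).const_sub 1) hx1').log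
    (div_ne_zero hl1' hx1')
  refine ((hfirst.const_mul l).add (hsecond.const_mul (1 - l))).congr_deriv ?_
  simp only [id, Pi.div_apply]
  field_simp
  ring

theorem deriv_deriv_relEntBer_comp_of_eq {q : ℝ → ℝ} {l θ₀ : ℝ} (hq : ContDiff ℝ 2 q)
    (hq0 : ∀ θ, q θ ≠ 0) (hq1 : ∀ θ, q θ ≠ 1) (hqθ₀ : q θ₀ = l) :
    deriv (deriv fun θ => relEntBer l (q θ)) θ₀ = deriv q θ₀ ^ 2 / (l * (1 - l)) := by
  subst hqθ₀
  have hl1 : 1 - q θ₀ ≠ 0 := sub_ne_zero.mpr (hq1 θ₀).symm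
  have hq_diff : Differentiable ℝ q := hq.differentiable (by norm_num)
  set r : ℝ → ℝ := fun x => (x - q θ₀) / (x * (1 - x))
  have hfirst : deriv (fun θ => relEntBer (q θ₀) (q θ)) = deriv q * r ∘ q := by
    funext θ
    rw [Pi.mul_apply, mul_comm]
    exact ((hasDerivAt_relEntBer_s14 (hq0 θ₀) (hq1 θ₀) (hq0 θ) (hq1 θ)).comp θ
      (hq_diff θ).hasDerivAt).deriv
  have hr : HasDerivAt r (1 / (q θ₀ * (1 - q θ₀))) (q θ₀) := by
    refine (((hasDerivAt_id' (q θ₀)).sub_const (q θ₀)).div ((hasDerivAt_id' (q θ₀)).mul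
      ((hasDerivAt_id' (q θ₀)).const_sub 1)) (mul_ne_zero (hq0 θ₀) hl1)).congr_deriv ?_
    simp only [Pi.mul_apply, sub_self, zero_mul, sub_zero]
    field_simp
  rw [hfirst, ((hq.differentiable_deriv_two θ₀).hasDerivAt.mul
    (hr.comp θ₀ (hq_diff θ₀).hasDerivAt)).deriv]
  simp only [r, Function.comp_apply, sub_self, zero_div, mul_zero, zero_add]
  field_simp

noncomputable def gumbel (s x : ℝ) : ℝ := exp (-exp (-x / s))

noncomputable def gumbelQuantile (s l : ℝ) : ℝ := -s * log (-log l)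

theorem gumbel_pos (s x : ℝ) : 0 < gumbel s x := exp_pos _

theorem gumbel_lt_one (s x : ℝ) : gumbel s x < 1 :=
  exp_lt_one_iff.mpr (neg_neg_of_pos (exp_pos _))

theorem contDiff_gumbel (s : ℝ) : ContDiff ℝ 2 (gumbel s) := by
  unfold gumbel
  fun_prop

theorem hasDerivAt_gumbel (s x : ℝ) :
    HasDerivAt (gumbel s) (gumbel s x * exp (-x / s) / s) x := by
  have := ((((hasDerivAt_id' x).neg.div_const s).exp).neg).exp
  refine this.congr_deriv ?_
  simp only [gumbel, Pi.neg_apply]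
  ring

theorem exp_neg_gumbelQuantile_div {s l : ℝ} (hs : s ≠ 0) (hl : l ∈ Ioo 0 1) :
    exp (-gumbelQuantile s l / s) = -log l := by
  rw [gumbelQuantile, neg_mul, neg_neg, mul_div_cancel_left₀ _ hs,
    exp_log (neg_pos.mpr (log_neg hl.1 hl.2))]

theorem gumbel_gumbelQuantile {s l : ℝ} (hs : s ≠ 0) (hl : l ∈ Ioo 0 1) :
    gumbel s (gumbelQuantile s l) = l := by
  rw [gumbel, exp_neg_gumbelQuantile_div hs hl, neg_neg, exp_log hl.1]

theorem deriv_gumbel_gumbelQuantile {s l : ℝ} (hs : s ≠ 0) (hl : l ∈ Ioo 0 1) :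
    deriv (gumbel s) (gumbelQuantile s l) = -(l * log l) / s := by
  rw [(hasDerivAt_gumbel s _).deriv, gumbel_gumbelQuantile hs hl,
    exp_neg_gumbelQuantile_div hs hl, mul_neg]

noncomputable def gumbelCritical (l : ℝ) : ℝ := log l + 2 - 2 * l

-- `s ^ 2` times the curvature `I_{l,θ₀}''(θ₀)` of the Gumbel family.
noncomputable def gumbelCurvature (l : ℝ) : ℝ := l * log l ^ 2 / (1 - l)

theorem hasDerivAt_gumbelCritical {l : ℝ} (hl : l ≠ 0) :
    HasDerivAt gumbelCritical (l⁻¹ - 2) l :=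
  (((hasDerivAt_log hl).add_const 2).sub ((hasDerivAt_id' l).const_mul 2)).congr_deriv
    (by ring)

theorem continuousOn_gumbelCritical : ContinuousOn gumbelCritical (Ioi 0) := fun _ hl =>
  (hasDerivAt_gumbelCritical (ne_of_gt hl)).continuousAt.continuousWithinAt

theorem gumbelCritical_strictMonoOn : StrictMonoOn gumbelCritical (Ioc 0 (1 / 2)) := by
  refine strictMonoOn_of_deriv_pos (convex_Ioc _ _)
    (continuousOn_gumbelCritical.mono Ioc_subset_Ioi_self) fun l hl => ?_
  rw [interior_Ioc] at hl
  rw [(hasDerivAt_gumbelCritical hl.1.ne').deriv, sub_pos, lt_inv_comm₀ two_pos hl.1]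
  linarith [hl.2]

theorem gumbelCritical_strictAntiOn : StrictAntiOn gumbelCritical (Icc (1 / 2) 1) := by
  have hpos : ∀ l ∈ Icc (1 / 2 : ℝ) 1, 0 < l := fun l hl => by linarith [hl.1]
  refine strictAntiOn_of_deriv_neg (convex_Icc _ _)
    (continuousOn_gumbelCritical.mono hpos) fun l hl => ?_
  rw [interior_Icc] at hl
  rw [(hasDerivAt_gumbelCritical (hpos l (Ioo_subset_Icc_self hl)).ne').deriv, sub_neg,
    inv_lt_comm₀ (hpos l (Ioo_subset_Icc_self hl)) two_pos]
  linarith [hl.1]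

theorem exists_gumbelCritical_eq_zero : ∃ l₂ ∈ Ioo (0 : ℝ) (1 / 2), gumbelCritical l₂ = 0 := by
  have hexp : exp (-2) < 1 / 2 := by
    rw [exp_neg, one_div]
    exact inv_strictAnti₀ two_pos (by linarith [add_one_lt_exp (two_ne_zero (α := ℝ))])
  have hleft : gumbelCritical (exp (-2)) < 0 := by
    simp only [gumbelCritical, log_exp]
    linarith [exp_pos (-2)]
  have hright : 0 < gumbelCritical (1 / 2) := by
    simp only [gumbelCritical, one_div, log_inv]
    linarith [log_two_lt_d9]
  obtain ⟨l₂, hl₂, hroot⟩ := intermediate_value_Ioo hexp.le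
    (continuousOn_gumbelCritical.mono fun l hl => (exp_pos _).trans_le hl.1) ⟨hleft, hright⟩
  exact ⟨l₂, ⟨(exp_pos _).trans hl₂.1, hl₂.2⟩, hroot⟩

theorem eq_of_gumbelCritical_eq_zero {l₂ l : ℝ} (h₂ : l₂ ∈ Ioo (0 : ℝ) (1 / 2))
    (hroot : gumbelCritical l₂ = 0) (hl : l ∈ Ioo (0 : ℝ) (1 / 2)) (hl0 : gumbelCritical l = 0) :
    l = l₂ :=
  gumbelCritical_strictMonoOn.injOn (Ioo_subset_Ioc_self hl) (Ioo_subset_Ioc_self h₂)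
    (hl0.trans hroot.symm)

theorem gumbelCritical_neg_of_lt {l₂ l : ℝ} (h₂ : l₂ < 1 / 2) (hroot : gumbelCritical l₂ = 0)
    (hl : 0 < l) (hlt : l < l₂) : gumbelCritical l < 0 :=
  hroot ▸ gumbelCritical_strictMonoOn ⟨hl, by linarith⟩ ⟨hl.trans hlt, h₂.le⟩ hlt

theorem gumbelCritical_pos_of_gt {l₂ l : ℝ} (h₂ : l₂ ∈ Ioo (0 : ℝ) (1 / 2))
    (hroot : gumbelCritical l₂ = 0) (hgt : l₂ < l) (hl : l < 1) : 0 < gumbelCritical l := by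
  rcases le_or_gt l (1 / 2) with hle | hgt'
  · exact hroot ▸ gumbelCritical_strictMonoOn (Ioo_subset_Ioc_self h₂) ⟨h₂.1.trans hgt, hle⟩ hgt
  · have hone : gumbelCritical 1 = 0 := by norm_num [gumbelCritical]
    exact hone ▸ gumbelCritical_strictAntiOn ⟨hgt'.le, hl.le⟩ ⟨by norm_num, le_rfl⟩ hl

theorem hasDerivAt_gumbelCurvature {l : ℝ} (hl0 : l ≠ 0) (hl1 : l ≠ 1) :
    HasDerivAt gumbelCurvature (log l * gumbelCritical l / (1 - l) ^ 2) l := by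
  have hl1' : 1 - l ≠ 0 := sub_ne_zero.mpr hl1.symm
  refine (((hasDerivAt_id' l).mul ((hasDerivAt_log hl0).pow 2)).div
    ((hasDerivAt_id' l).const_sub 1) hl1').congr_deriv ?_
  simp only [gumbelCritical, Pi.mul_apply, Pi.pow_apply]
  field_simp
  ring

theorem gumbelCurvature_lt_of_ne {l₂ l : ℝ} (h₂ : l₂ ∈ Ioo (0 : ℝ) (1 / 2))
    (hroot : gumbelCritical l₂ = 0) (hl : l ∈ Ioo (0 : ℝ) 1) (hne : l ≠ l₂) :
    gumbelCurvature l < gumbelCurvature l₂ := by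
  have hl₂1 : l₂ < 1 := by linarith [h₂.2]
  have hderiv : ∀ x ∈ Ioo (0 : ℝ) 1,
      HasDerivAt gumbelCurvature (log x * gumbelCritical x / (1 - x) ^ 2) x := fun x hx =>
    hasDerivAt_gumbelCurvature hx.1.ne' hx.2.ne
  have hcont : ContinuousOn gumbelCurvature (Ioo 0 1) := fun x hx =>
    (hderiv x hx).continuousAt.continuousWithinAt
  rcases hne.lt_or_gt with hlt | hgt
  · refine strictMonoOn_of_deriv_pos (convex_Ioc 0 l₂)
      (hcont.mono fun x hx => ⟨hx.1, hx.2.trans_lt hl₂1⟩) (fun x hx => ?_)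
      ⟨hl.1, hlt.le⟩ ⟨h₂.1, le_rfl⟩ hlt
    rw [interior_Ioc] at hx
    rw [(hderiv x ⟨hx.1, hx.2.trans hl₂1⟩).deriv]
    exact div_pos (mul_pos_of_neg_of_neg (log_neg hx.1 (hx.2.trans hl₂1))
      (gumbelCritical_neg_of_lt h₂.2 hroot hx.1 hx.2)) (pow_pos (by linarith [hx.2]) 2)
  · refine strictAntiOn_of_deriv_neg (convex_Ico l₂ 1)
      (hcont.mono fun x hx => ⟨h₂.1.trans_le hx.1, hx.2⟩) (fun x hx => ?_)
      ⟨le_rfl, hl₂1⟩ ⟨hgt.le, hl.2⟩ hgt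
    rw [interior_Ico] at hx
    rw [(hderiv x ⟨h₂.1.trans hx.1, hx.2⟩).deriv]
    exact div_neg_of_neg_of_pos (mul_neg_of_neg_of_pos (log_neg (h₂.1.trans hx.1) hx.2)
      (gumbelCritical_pos_of_gt h₂ hroot hx.1 hx.2)) (pow_pos (by linarith [hx.2]) 2)

theorem deriv_deriv_relEntBer_gumbel {s l : ℝ} (hs : s ≠ 0) (hl : l ∈ Ioo 0 1) (θ₀ : ℝ) :
    deriv (deriv fun θ => relEntBer l (gumbel s (θ + gumbelQuantile s l - θ₀))) θ₀ =
      deriv (gumbel s) (gumbelQuantile s l) ^ 2 / (l * (1 - l)) := by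
  have hq : ContDiff ℝ 2 fun θ => gumbel s (θ + gumbelQuantile s l - θ₀) :=
    (contDiff_gumbel s).comp (by fun_prop)
  rw [deriv_deriv_relEntBer_comp_of_eq hq (fun θ => (gumbel_pos s _).ne')
    (fun θ => (gumbel_lt_one s _).ne) (by rw [add_sub_cancel_left, gumbel_gumbelQuantile hs hl])]
  simp only [add_sub_assoc, deriv_comp_add_const, add_sub_cancel]

theorem stmt_14_general (s θ₀ : ℝ) (hs : 0 < s)
    (lam : ℝ) (hlam : lam ∈ Set.Ioo (0 : ℝ) 1)
    (G : ℝ → ℝ) (hG : ∀ x, G x = Real.exp (-Real.exp (-x / s)))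
    (Ginv : ℝ → ℝ) (hGinv : ∀ l, Ginv l = -s * Real.log (-Real.log l))
    -- `h l θ = F_{θ₀}(F_θ^{-1}(l)) = G(θ + G^{-1}(l) − θ₀)`
    (h : ℝ → ℝ → ℝ) (hh : ∀ l θ, h l θ = G (θ + Ginv l - θ₀))
    -- `curv l = I_{l,θ₀}''(θ₀)` where `I_{l,θ₀}(θ) = H(l | h_{l,θ₀}(θ))`
    (curv : ℝ → ℝ)
    (hcurv : ∀ l, curv l = deriv (deriv fun θ => relEntBer l (h l θ)) θ₀) :
    curv lam = (deriv G (Ginv lam)) ^ 2 / (lam * (1 - lam)) ∧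
    curv lam = lam * (Real.log lam) ^ 2 / (s ^ 2 * (1 - lam)) ∧
    ∃ l₂ : ℝ, l₂ ∈ Set.Ioo (0 : ℝ) (1 / 2) ∧ Real.log l₂ + 2 - 2 * l₂ = 0 ∧
      (∀ l ∈ Set.Ioo (0 : ℝ) (1 / 2), Real.log l + 2 - 2 * l = 0 → l = l₂) ∧
      (∀ l ∈ Set.Ioo (0 : ℝ) 1, l ≠ l₂ → curv l < curv l₂) ∧
      curv l₂ = 4 * l₂ * (1 - l₂) / s ^ 2 := by
  obtain rfl : G = gumbel s := funext hG
  obtain rfl : Ginv = gumbelQuantile s := funext hGinv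
  have hfisher : ∀ l ∈ Ioo (0 : ℝ) 1,
      curv l = deriv (gumbel s) (gumbelQuantile s l) ^ 2 / (l * (1 - l)) := fun l hl => by
    rw [hcurv, funext (hh l), deriv_deriv_relEntBer_gumbel hs.ne' hl]
  have hclosed : ∀ l ∈ Ioo (0 : ℝ) 1, curv l = gumbelCurvature l / s ^ 2 := fun l hl => by
    rw [hfisher l hl, deriv_gumbel_gumbelQuantile hs.ne' hl, gumbelCurvature]
    field_simp [hl.1.ne', (sub_pos.mpr hl.2).ne']
  obtain ⟨l₂, h₂, hroot⟩ := exists_gumbelCritical_eq_zero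
  have hl₂ : l₂ ∈ Ioo (0 : ℝ) 1 := ⟨h₂.1, by linarith [h₂.2]⟩
  refine ⟨hfisher lam hlam, ?_, l₂, h₂, hroot,
    fun l hl hl0 => eq_of_gumbelCritical_eq_zero h₂ hroot hl hl0, fun l hl hne => ?_, ?_⟩
  · rw [hclosed lam hlam, gumbelCurvature, div_div, mul_comm (1 - lam)]
  · rw [hclosed l hl, hclosed l₂ hl₂]
    exact div_lt_div_of_pos_right (gumbelCurvature_lt_of_ne h₂ hroot hl hne) (pow_pos hs 2)
  · have hlog : log l₂ = 2 * l₂ - 2 := by rw [gumbelCritical] at hroot; linarith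
    rw [hclosed l₂ hl₂, gumbelCurvature, hlog]
    field_simp [(sub_pos.mpr hl₂.2).ne']
    ring

/-- Gumbel location family `F_θ(x) = exp(−e^{−(x−θ)/s})`: curvature of the
method-of-quantiles rate function at `θ₀` and its unique maximizer `λ̃₂` in `λ`. -/
theorem stmt_14 (s θ₀ : ℝ) (hs : 0 < s)
    (lam : ℝ) (hlam : lam ∈ Set.Ioo (0 : ℝ) 1)
    (G : ℝ → ℝ) (hG : ∀ x, G x = Real.exp (-Real.exp (-x / s)))
    (Ginv : ℝ → ℝ) (hGinv : ∀ l, Ginv l = -s * Real.log (-Real.log l))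
    (F : ℝ → ℝ → ℝ) (hF : ∀ θ x, F θ x = G (x - θ))
    -- `h l θ = F_{θ₀}(F_θ^{-1}(l)) = G(θ + G^{-1}(l) − θ₀)`
    (h : ℝ → ℝ → ℝ) (hh : ∀ l θ, h l θ = G (θ + Ginv l - θ₀))
    -- `curv l = I_{l,θ₀}''(θ₀)` where `I_{l,θ₀}(θ) = H(l | h_{l,θ₀}(θ))`
    (curv : ℝ → ℝ)
    (hcurv : ∀ l, curv l = deriv (deriv fun θ => relEntBer l (h l θ)) θ₀) :
    curv lam = (deriv G (Ginv lam)) ^ 2 / (lam * (1 - lam)) ∧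
    curv lam = lam * (Real.log lam) ^ 2 / (s ^ 2 * (1 - lam)) ∧
    ∃ l₂ : ℝ, l₂ ∈ Set.Ioo (0 : ℝ) (1 / 2) ∧ Real.log l₂ + 2 - 2 * l₂ = 0 ∧
      (∀ l ∈ Set.Ioo (0 : ℝ) (1 / 2), Real.log l + 2 - 2 * l = 0 → l = l₂) ∧
      (∀ l ∈ Set.Ioo (0 : ℝ) 1, l ≠ l₂ → curv l < curv l₂) ∧
      curv l₂ = 4 * l₂ * (1 - l₂) / s ^ 2 :=
  stmt_14_general s θ₀ hs lam hlam G hG Ginv hGinv h hh curv hcurv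
end

section
/- Let λ̃_2 be the unique root in (0, 1/2) of log λ + 2 − 2λ = 0. Then 4λ̃_2(1 − λ̃_2) > 6/π². (Numerically 4λ̃_2(1−λ̃_2) ≈ 0.6476 while 6/π² ≈ 0.6079.) Consequently, for the Gumbel location family with known scale s > 0, the MQ rate-function curvature I_{λ̃_2,θ_0}″(θ_0) = 4λ̃_2(1−λ̃_2)/s² strictly exceeds the MM rate-function curvature J_{θ_0}″(θ_0) = 6/(π²s²). -/
open Set

/-- If `λ̃₂ ∈ (0, 1/2)` is the root of `log λ + 2 − 2λ = 0`, then
`4λ̃₂(1 − λ̃₂) > 6/π²`; consequently, for every scale `s > 0`, the MQ rate-function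
curvature `4λ̃₂(1−λ̃₂)/s²` strictly exceeds the MM rate-function curvature `6/(π²s²)`
for the Gumbel location family. -/
theorem stmt_15 (l₂ : ℝ) (h₂ : l₂ ∈ Set.Ioo (0 : ℝ) (1 / 2))
    (h₂eq : Real.log l₂ + 2 - 2 * l₂ = 0) :
    6 / Real.pi ^ 2 < 4 * l₂ * (1 - l₂) ∧
    ∀ s : ℝ, 0 < s → 6 / (Real.pi ^ 2 * s ^ 2) < 4 * l₂ * (1 - l₂) / s ^ 2 := by
  obtain ⟨hl0, hl2⟩ := h₂
  -- Step 1: log 5 > 8/5, since e^8 < 3125 = 5^5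
  have hexp : Real.exp 1 < 2.7182818286 := Real.exp_one_lt_d9
  have he8 : Real.exp 8 < 3125 := by
    have h8 : Real.exp 8 = (Real.exp 1) ^ 8 := by
      rw [← Real.exp_nat_mul]; norm_num
    nlinarith [Real.exp_pos 1, pow_lt_pow_left₀ hexp (Real.exp_pos 1).le (n := 8) (by norm_num)]
  have hlog5 : (8 : ℝ) / 5 < Real.log 5 := by
    rw [Real.lt_log_iff_exp_lt (by norm_num)]
    have h5 : (Real.exp (8/5)) ^ (5 : ℕ) = Real.exp 8 := by
      rw [← Real.exp_nat_mul]; norm_num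
    by_contra h
    push_neg at h
    have h5' : (5 : ℝ) ^ (5 : ℕ) ≤ (Real.exp (8/5)) ^ (5 : ℕ) :=
      pow_le_pow_left₀ (by norm_num) h 5
    rw [h5] at h5'
    norm_num at h5'
    linarith
  -- Step 2: l₂ > 1/5
  have hl5 : 1 / 5 < l₂ := by
    have hle : Real.log (5 * l₂) ≤ 5 * l₂ - 1 :=
      Real.log_le_sub_one_of_pos (by positivity)
    have hsplit : Real.log (5 * l₂) = Real.log 5 + Real.log l₂ :=
      Real.log_mul (by norm_num) (ne_of_gt hl0)
    -- log l₂ = 2 l₂ - 2, so log 5 ≤ 3 l₂ + 1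
    nlinarith [hle, hsplit, hlog5, h₂eq]
  -- Step 3: conclude
  have hpi : 3.1415 < Real.pi := by
    have := Real.pi_gt_d6
    linarith
  have hmain : 6 / Real.pi ^ 2 < 4 * l₂ * (1 - l₂) := by
    have h1 : (16 : ℝ) / 25 < 4 * l₂ * (1 - l₂) := by nlinarith
    have h2 : 6 / Real.pi ^ 2 < 16 / 25 := by
      rw [div_lt_div_iff₀ (by positivity) (by norm_num)]
      nlinarith
    linarith
  refine ⟨hmain, fun s hs => ?_⟩
  rw [show (6 : ℝ) / (Real.pi ^ 2 * s ^ 2) = 6 / Real.pi ^ 2 / s ^ 2 by rw [div_div]]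
  exact div_lt_div_of_pos_right hmain (by positivity)
end

section
/- Consider the logistic location family F_θ(x) := G(x − θ) with G(x) = 1/(1 + e^{−x/s}) for a known scale s > 0 and location parameter θ ∈ ℝ. Fix λ ∈ (0,1) and θ_0 ∈ ℝ, and let h_{λ,θ_0}(θ) := F_{θ_0}(F_θ^{−1}(λ)) = G(θ + G^{−1}(λ) − θ_0). Then the second derivative at θ = θ_0 of the rate function I_{λ,θ_0}(θ) := H(λ|h_{λ,θ_0}(θ)) equals I_{λ,θ_0}″(θ_0) = (G′(G^{−1}(λ)))²/(λ(1−λ)) = λ(1−λ)/s², and as a function of λ ∈ (0,1) it is uniquely maximized at λ = 1/2, with maximal value 1/(4s²). Moreover 1/(4s²) < 3/(π²s²), i.e. the value J_{θ_0}″(θ_0) = 3/(π²s²) for the MM estimator strictly exceeds I_{λ,θ_0}″(θ_0) for every λ ∈ (0,1). -/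
/-!
For `G` logistic with scale `s`, `∂_q H(l|q) = (q - l)/(q(1 - q))` and `G' = G(1 - G)/s`, so the
derivative of `y ↦ H(l | G y)` collapses to `(G y - l)/s`. Differentiating once more gives
`G(1 - G)/s²`, which at `y = G⁻¹(l)` is `l(1 - l)/s²`. The rest is `l(1 - l) < 1/4` for `l ≠ 1/2`
and `π² < 12`.
-/

open Set

noncomputable def logistic (s x : ℝ) : ℝ := 1 / (1 + Real.exp (-x / s))

namespace logistic

lemma pos (s x : ℝ) : 0 < logistic s x := by unfold logistic; positivity

lemma one_sub_eq (s x : ℝ) : 1 - logistic s x = Real.exp (-x / s) / (1 + Real.exp (-x / s)) := by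
  unfold logistic; field_simp; ring

lemma lt_one (s x : ℝ) : logistic s x < 1 := by
  rw [← sub_pos, one_sub_eq]; positivity

lemma hasDerivAt (s x : ℝ) :
    HasDerivAt (logistic s) (logistic s x * (1 - logistic s x) / s) x := by
  have hden : HasDerivAt (fun x => 1 + Real.exp (-x / s)) (Real.exp (-x / s) * (-1 / s)) x :=
    (((hasDerivAt_id x).neg.div_const s).exp).const_add 1
  refine ((hasDerivAt_const x (1 : ℝ)).div hden (by positivity)).congr_deriv ?_
  rw [one_sub_eq]; unfold logistic; field_simp; ring

lemma apply_logit {s : ℝ} (hs : s ≠ 0) {l : ℝ} (hl : l ∈ Ioo (0 : ℝ) 1) :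
    logistic s (-s * Real.log (1 / l - 1)) = l := by
  obtain ⟨hl0, hl1⟩ := hl
  have hpos : 0 < 1 / l - 1 := by rw [sub_pos, lt_div_iff₀ hl0]; linarith
  unfold logistic
  rw [show -(-s * Real.log (1 / l - 1)) / s = Real.log (1 / l - 1) by field_simp,
    Real.exp_log hpos]
  field_simp; ring

end logistic

lemma hasDerivAt_relEntBer_right {p q : ℝ} (hp0 : p ≠ 0) (hp1 : p ≠ 1) (hq0 : q ≠ 0)
    (hq1 : q ≠ 1) : HasDerivAt (relEntBer p) ((q - p) / (q * (1 - q))) q := by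
  have h1p : 1 - p ≠ 0 := sub_ne_zero.mpr (Ne.symm hp1)
  have h1q : 1 - q ≠ 0 := sub_ne_zero.mpr (Ne.symm hq1)
  have hleft := (((hasDerivAt_const q p).div (hasDerivAt_id q) hq0).log
    (div_ne_zero hp0 hq0)).const_mul p
  have hright := (((hasDerivAt_const q (1 - p)).div ((hasDerivAt_id q).const_sub 1) h1q).log
    (div_ne_zero h1p h1q)).const_mul (1 - p)
  refine (hleft.add hright).congr_deriv ?_
  simp only [id, Pi.div_apply]
  field_simp
  ring

lemma hasDerivAt_relEntBer_logistic {s l : ℝ} (hl : l ∈ Ioo (0 : ℝ) 1) (x : ℝ) :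
    HasDerivAt (fun x => relEntBer l (logistic s x)) ((logistic s x - l) / s) x := by
  have hG0 := (logistic.pos s x).ne'
  have hG1 := (logistic.lt_one s x).ne
  have h1G : 1 - logistic s x ≠ 0 := sub_ne_zero.mpr (Ne.symm hG1)
  refine ((hasDerivAt_relEntBer_right hl.1.ne' hl.2.ne hG0 hG1).comp x
    (logistic.hasDerivAt s x)).congr_deriv ?_
  field_simp

lemma deriv_deriv_relEntBer_logistic_add {s l : ℝ} (hl : l ∈ Ioo (0 : ℝ) 1) (c x : ℝ) :
    deriv (deriv fun θ => relEntBer l (logistic s (θ + c))) x =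
      logistic s (x + c) * (1 - logistic s (x + c)) / s ^ 2 := by
  have hfirst : deriv (fun θ => relEntBer l (logistic s (θ + c))) =
      fun θ => (logistic s (θ + c) - l) / s :=
    funext fun θ => ((hasDerivAt_relEntBer_logistic hl (θ + c)).comp_add_const θ c).deriv
  rw [hfirst, ((((logistic.hasDerivAt s (x + c)).comp_add_const x c).sub_const l).div_const s).deriv]
  ring

theorem stmt_16_general (s θ₀ : ℝ) (hs : 0 < s)
    (lam : ℝ) (hlam : lam ∈ Set.Ioo (0 : ℝ) 1)
    (G : ℝ → ℝ) (hG : ∀ x, G x = 1 / (1 + Real.exp (-x / s)))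
    (Ginv : ℝ → ℝ) (hGinv : ∀ l, Ginv l = -s * Real.log (1 / l - 1))
    -- `h l θ = F_{θ₀}(F_θ^{-1}(l)) = G(θ + G^{-1}(l) − θ₀)`
    (h : ℝ → ℝ → ℝ) (hh : ∀ l θ, h l θ = G (θ + Ginv l - θ₀))
    -- `curv l = I_{l,θ₀}''(θ₀)` where `I_{l,θ₀}(θ) = H(l | h_{l,θ₀}(θ))`
    (curv : ℝ → ℝ)
    (hcurv : ∀ l, curv l = deriv (deriv fun θ => relEntBer l (h l θ)) θ₀) :
    curv lam = (deriv G (Ginv lam)) ^ 2 / (lam * (1 - lam)) ∧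
    curv lam = lam * (1 - lam) / s ^ 2 ∧
    (∀ l ∈ Set.Ioo (0 : ℝ) 1, l ≠ 1 / 2 → curv l < curv (1 / 2)) ∧
    curv (1 / 2) = 1 / (4 * s ^ 2) ∧
    1 / (4 * s ^ 2) < 3 / (Real.pi ^ 2 * s ^ 2) := by
  have hGl : G = logistic s := funext hG
  have hGinv_l : ∀ l ∈ Ioo (0 : ℝ) 1, logistic s (Ginv l) = l := fun l hl => by
    rw [hGinv, logistic.apply_logit hs.ne' hl]
  have hcurv_eq : ∀ l ∈ Ioo (0 : ℝ) 1, curv l = l * (1 - l) / s ^ 2 := fun l hl => by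
    have hI : (fun θ => relEntBer l (h l θ)) =
        fun θ => relEntBer l (logistic s (θ + (Ginv l - θ₀))) := by
      funext θ; rw [hh, hGl, add_sub_assoc]
    rw [hcurv, hI, deriv_deriv_relEntBer_logistic_add hl, add_sub_cancel, hGinv_l l hl]
  have hhalf : (1 / 2 : ℝ) ∈ Ioo (0 : ℝ) 1 := by norm_num
  have hderivG : deriv G (Ginv lam) = lam * (1 - lam) / s := by
    rw [hGl, (logistic.hasDerivAt s _).deriv, hGinv_l lam hlam]
  have hpi_sq : Real.pi ^ 2 < 12 := by nlinarith [Real.pi_pos, Real.pi_lt_d2]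
  refine ⟨?_, hcurv_eq lam hlam, fun l hl hne => ?_, ?_, ?_⟩
  · have : lam * (1 - lam) ≠ 0 := (mul_pos hlam.1 (sub_pos.mpr hlam.2)).ne'
    rw [hcurv_eq lam hlam, hderivG]
    field_simp
  · rw [hcurv_eq l hl, hcurv_eq _ hhalf]
    have : 0 < (l - 1 / 2) ^ 2 := pow_two_pos_of_ne_zero (sub_ne_zero.mpr hne)
    gcongr ?_ / _
    nlinarith
  · rw [hcurv_eq _ hhalf]; ring
  · rw [div_lt_div_iff₀ (by positivity) (by positivity)]
    nlinarith [pow_pos hs 2]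

/-- Logistic location family `F_θ(x) = 1/(1 + e^{−(x−θ)/s})`: curvature of the
method-of-quantiles rate function at `θ₀`, uniquely maximized at `λ = 1/2` with value
`1/(4s²)`, which is smaller than the method-of-moments curvature `3/(π²s²)`. -/
theorem stmt_16 (s θ₀ : ℝ) (hs : 0 < s)
    (lam : ℝ) (hlam : lam ∈ Set.Ioo (0 : ℝ) 1)
    (G : ℝ → ℝ) (hG : ∀ x, G x = 1 / (1 + Real.exp (-x / s)))
    (Ginv : ℝ → ℝ) (hGinv : ∀ l, Ginv l = -s * Real.log (1 / l - 1))
    (F : ℝ → ℝ → ℝ) (hF : ∀ θ x, F θ x = G (x - θ))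
    -- `h l θ = F_{θ₀}(F_θ^{-1}(l)) = G(θ + G^{-1}(l) − θ₀)`
    (h : ℝ → ℝ → ℝ) (hh : ∀ l θ, h l θ = G (θ + Ginv l - θ₀))
    -- `curv l = I_{l,θ₀}''(θ₀)` where `I_{l,θ₀}(θ) = H(l | h_{l,θ₀}(θ))`
    (curv : ℝ → ℝ)
    (hcurv : ∀ l, curv l = deriv (deriv fun θ => relEntBer l (h l θ)) θ₀) :
    curv lam = (deriv G (Ginv lam)) ^ 2 / (lam * (1 - lam)) ∧
    curv lam = lam * (1 - lam) / s ^ 2 ∧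
    (∀ l ∈ Set.Ioo (0 : ℝ) 1, l ≠ 1 / 2 → curv l < curv (1 / 2)) ∧
    curv (1 / 2) = 1 / (4 * s ^ 2) ∧
    1 / (4 * s ^ 2) < 3 / (Real.pi ^ 2 * s ^ 2) :=
  stmt_16_general s θ₀ hs lam hlam G hG Ginv hGinv h hh curv hcurv
end
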